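/- Let n ≥ 2, A ∈ ℝ₊^{n×n} with positive diagonal, p ∈ ℝ₊ⁿ, γ ∈ ℝ, and suppose A or [[A, p],[𝟙ᵀ, 1]] is irreducible. Then the function g(x) = ∏ᵢ e^{−xᵢ}(pᵢ + Σⱼ A_{i,j} e^{xⱼ}) restricted to V_γ = {x : Σᵢ xᵢ = γ} tends to infinity as ‖x‖_∞ → ∞ along V_γ, and g attains a unique minimum point on V_γ. -/

import Mathlib

/-!
Write the `i`-th factor of `g` as `exp (-x i) * ∑ v, B i v * exp (X v)`, where `B = aug A p` and
`X` is `x` extended by the coordinate `0`. Every positive entry `B i v` gives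
`g x ≥ c * exp (X v - X i)`; chaining these bounds along the paths supplied by irreducibility
bounds `-min x`, hence `‖x‖` on `V_γ`, by a multiple of `log (g x)`. This is coercivity, and a
minimum on the closed set `V_γ` follows. By Cauchy–Schwarz, each factor at the midpoint of `x`
and `y` is at most the geometric mean of its values at `x` and `y`, strictly unless `Y - X` is
constant along the positive entries of its row; for two minimizers irreducibility then makes
`Y - X` constant, hence zero.
-/

noncomputable def g {n : ℕ} (A : Matrix (Fin n) (Fin n) ℝ) (p : Fin n → ℝ)
    (x : Fin n → ℝ) : ℝ :=
  ∏ i, Real.exp (-(x i)) * (p i + ∑ j, A i j * Real.exp (x j))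

def Irred {m : ℕ} (M : Matrix (Fin m) (Fin m) ℝ) : Prop :=
  ∀ r s : Fin m, r ≠ s → ∃ (k : ℕ) (i : Fin (k+1) → Fin m),
    Function.Injective i ∧ i 0 = r ∧ i (Fin.last k) = s ∧
    ∀ j : Fin k, 0 < M (i j.castSucc) (i j.succ)

/-- The augmented matrix [[A, p],[𝟙ᵀ, 1]]. -/
def aug {n : ℕ} (A : Matrix (Fin n) (Fin n) ℝ) (p : Fin n → ℝ) :
    Matrix (Fin (n+1)) (Fin (n+1)) ℝ := fun i j =>
  if hi : (i : ℕ) < n then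
    (if hj : (j : ℕ) < n then A ⟨i, hi⟩ ⟨j, hj⟩ else p ⟨i, hi⟩)
  else 1

open Real Finset Filter Topology

theorem Finset.sum_sq_mul_sum_sq_sub_sq_sum_mul {ι : Type*} (s : Finset ι) (f g : ι → ℝ) :
    (∑ i ∈ s, f i ^ 2) * (∑ i ∈ s, g i ^ 2) - (∑ i ∈ s, f i * g i) ^ 2
      = (∑ i ∈ s, ∑ j ∈ s, (f i * g j - f j * g i) ^ 2) / 2 := by
  have hterm : ∀ i j, (f i * g j - f j * g i) ^ 2
      = f i ^ 2 * g j ^ 2 + f j ^ 2 * g i ^ 2 - 2 * ((f i * g i) * (f j * g j)) := fun i j => by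
    ring
  simp_rw [hterm, sum_sub_distrib, sum_add_distrib, ← mul_sum, ← sum_mul]
  rw [← mul_sum]
  ring

theorem Finset.sq_sum_mul_lt_sum_sq_mul_sum_sq {ι : Type*} (s : Finset ι) (f g : ι → ℝ)
    {i j : ι} (hi : i ∈ s) (hj : j ∈ s) (hij : f i * g j ≠ f j * g i) :
    (∑ k ∈ s, f k * g k) ^ 2 < (∑ k ∈ s, f k ^ 2) * (∑ k ∈ s, g k ^ 2) := by
  rw [← sub_pos, sum_sq_mul_sum_sq_sub_sq_sum_mul]
  refine div_pos (sum_pos' (fun _ _ => sum_nonneg fun _ _ => sq_nonneg _) ⟨i, hi, ?_⟩) two_pos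
  exact sum_pos' (fun _ _ => sq_nonneg _) ⟨j, hj, sq_pos_of_ne_zero (sub_ne_zero.2 hij)⟩

section ExpSum

variable {ι : Type*} (s : Finset ι) (w a b : ι → ℝ)

theorem sq_sum_mul_exp_half_le (hw : ∀ i ∈ s, 0 ≤ w i) :
    (∑ i ∈ s, w i * exp ((a i + b i) / 2)) ^ 2
      ≤ (∑ i ∈ s, w i * exp (a i)) * (∑ i ∈ s, w i * exp (b i)) := by
  refine sum_sq_le_sum_mul_sum_of_sq_le_mul s (fun i hi => by positivity [hw i hi])
    (fun i hi => by positivity [hw i hi]) fun i _ => le_of_eq ?_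
  rw [mul_pow, sq (exp _), ← exp_add, add_halves, exp_add]
  ring

theorem sq_sum_mul_exp_half_lt (hw : ∀ i ∈ s, 0 ≤ w i) {i j : ι} (hi : i ∈ s) (hj : j ∈ s)
    (hwi : 0 < w i) (hwj : 0 < w j) (hij : a i - b i ≠ a j - b j) :
    (∑ k ∈ s, w k * exp ((a k + b k) / 2)) ^ 2
      < (∑ k ∈ s, w k * exp (a k)) * (∑ k ∈ s, w k * exp (b k)) := by
  set f : ι → ℝ := fun k => √(w k) * exp (a k / 2)
  set g : ι → ℝ := fun k => √(w k) * exp (b k / 2)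
  have hsq : ∀ k ∈ s, ∀ c : ℝ, (√(w k) * exp (c / 2)) ^ 2 = w k * exp c := fun k hk c => by
    rw [mul_pow, sq_sqrt (hw k hk), sq (exp _), ← exp_add, add_halves]
  have hfg : ∀ k ∈ s, f k * g k = w k * exp ((a k + b k) / 2) := fun k hk => by
    rw [mul_mul_mul_comm, mul_self_sqrt (hw k hk), ← exp_add]; ring_nf
  have hcross : f i * g j ≠ f j * g i := by
    have hmul : ∀ k l, f k * g l = √(w k) * √(w l) * exp ((a k + b l) / 2) := fun k l => by
      simp only [f, g]; rw [add_div, exp_add]; ring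
    rw [hmul, hmul, mul_comm √(w j), Ne,
      mul_right_inj' (mul_pos (sqrt_pos.2 hwi) (sqrt_pos.2 hwj)).ne', exp_eq_exp]
    contrapose! hij
    linarith
  rw [← sum_congr rfl hfg, ← sum_congr rfl fun k hk => hsq k hk (a k),
    ← sum_congr rfl fun k hk => hsq k hk (b k)]
  exact sq_sum_mul_lt_sum_sq_mul_sum_sq s f g hi hj hcross

end ExpSum

theorem exists_pos_le_of_pos {α : Type*} [Finite α] (f : α → ℝ) :
    ∃ μ > 0, ∀ a, 0 < f a → μ ≤ f a := by
  have hle : ∀ a, ∀ᶠ μ in 𝓝[>] (0 : ℝ), 0 < f a → μ ≤ f a := fun a => by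
    by_cases ha : 0 < f a
    · exact ((eventually_le_nhds ha).filter_mono nhdsWithin_le_nhds).mono fun _ h _ => h
    · exact Eventually.of_forall fun _ h => absurd h ha
  exact (eventually_mem_nhdsWithin.and (eventually_all.2 hle)).exists

namespace Irred

variable {m : ℕ} {M : Matrix (Fin m) (Fin m) ℝ}

theorem sub_le_mul (hM : Irred M) (X : Fin m → ℝ) {C : ℝ} (hC : 0 ≤ C) (s : Fin m)
    (hX : ∀ u v, u ≠ s → 0 < M u v → X v - X u ≤ C) (r : Fin m) :
    X s - X r ≤ m * C := by
  rcases eq_or_ne r s with rfl | hrs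
  · simpa using mul_nonneg (Nat.cast_nonneg m) hC
  obtain ⟨k, i, hinj, rfl, rfl, hpos⟩ := hM r s hrs
  have hstep : ∀ t : Fin (k + 1), X (i t) - X (i 0) ≤ t * C := fun t => by
    induction t using Fin.induction with
    | zero => simp
    | succ t ih =>
      have := hX _ _ (hinj.ne (Fin.castSucc_lt_last t).ne) (hpos t)
      simp only [Fin.val_succ, Fin.val_castSucc] at ih ⊢
      push_cast
      linarith
  have hk : k + 1 ≤ m := by simpa using Fintype.card_le_of_injective i hinj
  calc X (i (Fin.last k)) - X (i 0) ≤ k * C := by simpa using hstep (Fin.last k)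
    _ ≤ m * C := by gcongr; exact_mod_cast (Nat.le_succ k).trans hk

theorem eq_of_forall_pos (hM : Irred M) (D : Fin m → ℝ) (s : Fin m)
    (hD : ∀ u v, u ≠ s → 0 < M u v → D v = D u) (r : Fin m) : D r = D s := by
  have h₁ := hM.sub_le_mul D le_rfl s (fun u v hu huv => by rw [hD u v hu huv, sub_self]) r
  have h₂ := hM.sub_le_mul (-D) le_rfl s (fun u v hu huv => by simp [hD u v hu huv]) r
  simp only [mul_zero, Pi.neg_apply] at h₁ h₂
  linarith

end Irred

theorem norm_le_two_mul_abs_sum_sub {n : ℕ} (x : Fin n → ℝ) {r : Fin n} (hr : ∀ j, x r ≤ x j) :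
    ‖x‖ ≤ 2 * |∑ i, x i| - n * x r := by
  have hn : (1 : ℝ) ≤ n := by exact_mod_cast r.pos
  have hmin : n * x r ≤ ∑ i, x i := by
    simpa using card_nsmul_le_sum univ x (x r) fun j _ => hr j
  have hgap : ∀ i, x i - x r ≤ ∑ i, x i - n * x r := fun i => by
    simpa [sum_sub_distrib] using
      single_le_sum (f := fun j => x j - x r) (fun j _ => sub_nonneg.2 (hr j)) (mem_univ i)
  have habs := le_abs_self (∑ i, x i)
  have habs₀ := abs_nonneg (∑ i, x i)
  have hcoord : ∀ i, |x i| ≤ 2 * |∑ i, x i| - n * x r := fun i => by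
    rw [abs_le]
    rcases le_total 0 (x r) with h | h
    · constructor <;> nlinarith [hgap i, hr i]
    · constructor <;> nlinarith [hgap i, hr i, mul_nonneg (sub_nonneg.2 hn) (neg_nonneg.2 h)]
  exact (pi_norm_le_iff_of_nonneg ((abs_nonneg _).trans (hcoord r))).2 hcoord

section Aug

variable {n : ℕ} (A : Matrix (Fin n) (Fin n) ℝ) (p : Fin n → ℝ)

@[simp] theorem aug_castSucc_castSucc (i j : Fin n) : aug A p i.castSucc j.castSucc = A i j := by
  simp [aug]

@[simp] theorem aug_castSucc_last (i : Fin n) : aug A p i.castSucc (Fin.last n) = p i := by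
  simp [aug]

theorem aug_nonneg (hA : ∀ i j, 0 ≤ A i j) (hp : ∀ i, 0 ≤ p i) (u v : Fin (n + 1)) :
    0 ≤ aug A p u v := by
  unfold aug
  split_ifs <;> simp [hA, hp]

end Aug

section Factor

variable {n : ℕ}

def extendZero (x : Fin n → ℝ) : Fin (n + 1) → ℝ := Fin.snoc x 0

@[simp] theorem extendZero_castSucc (x : Fin n → ℝ) (i : Fin n) :
    extendZero x i.castSucc = x i :=
  Fin.snoc_castSucc ..

@[simp] theorem extendZero_last (x : Fin n → ℝ) : extendZero x (Fin.last n) = 0 :=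
  Fin.snoc_last ..

variable (A : Matrix (Fin n) (Fin n) ℝ) (p : Fin n → ℝ)

/-- The `i`-th factor `exp (-x i) * (p i + ∑ j, A i j * exp (x j))` of `g`, written as a row sum of
`aug A p` in which the extra node carries the coordinate `0`. -/
noncomputable def gFactor (x : Fin n → ℝ) (i : Fin n) : ℝ :=
  ∑ v, aug A p i.castSucc v * exp (extendZero x v - x i)

theorem g_eq_prod_gFactor (x : Fin n → ℝ) : g A p x = ∏ i, gFactor A p x i := by
  refine prod_congr rfl fun i _ => ?_
  simp only [gFactor, Fin.sum_univ_castSucc, extendZero_castSucc, extendZero_last,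
    aug_castSucc_castSucc, aug_castSucc_last, exp_sub, exp_zero, div_eq_mul_inv, one_mul,
    exp_neg, mul_add, mul_sum]
  rw [add_comm]
  congr 1
  · exact sum_congr rfl fun j _ => by ring
  · ring

variable {A p} (hA : ∀ i j, 0 ≤ A i j) (hp : ∀ i, 0 ≤ p i)
include hA hp

theorem aug_mul_exp_le_gFactor (x : Fin n → ℝ) (i : Fin n) (v : Fin (n + 1)) :
    aug A p i.castSucc v * exp (extendZero x v - x i) ≤ gFactor A p x i :=
  single_le_sum (f := fun v => aug A p i.castSucc v * exp (extendZero x v - x i))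
    (fun _ _ => mul_nonneg (aug_nonneg A p hA hp _ _) (exp_pos _).le) (mem_univ v)

theorem diag_le_gFactor (x : Fin n → ℝ) (i : Fin n) : A i i ≤ gFactor A p x i := by
  simpa using aug_mul_exp_le_gFactor hA hp x i i.castSucc

theorem gFactor_pos (hdiag : ∀ i, 0 < A i i) (x : Fin n → ℝ) (i : Fin n) :
    0 < gFactor A p x i :=
  (hdiag i).trans_le (diag_le_gFactor hA hp x i)

theorem g_pos (hdiag : ∀ i, 0 < A i i) (x : Fin n → ℝ) : 0 < g A p x := by
  rw [g_eq_prod_gFactor]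
  exact prod_pos fun i _ => gFactor_pos hA hp hdiag x i

end Factor

section Coercive

variable {n : ℕ} {A : Matrix (Fin n) (Fin n) ℝ} {p : Fin n → ℝ}
  (hA : ∀ i j, 0 ≤ A i j) (hp : ∀ i, 0 ≤ p i) (hdiag : ∀ i, 0 < A i i)
include hA hp hdiag

theorem exists_pos_mul_exp_le_g : ∃ c > 0, ∀ (x : Fin n → ℝ) (i : Fin n) (v : Fin (n + 1)),
    0 < aug A p i.castSucc v → c * exp (extendZero x v - x i) ≤ g A p x := by
  obtain ⟨μ, hμ, hμle⟩ :=
    exists_pos_le_of_pos fun q : Fin n × Fin (n + 1) => aug A p q.1.castSucc q.2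
  refine ⟨μ ^ n, pow_pos hμ n, fun x i v hiv => ?_⟩
  have hfac : ∀ j, μ ≤ gFactor A p x j := fun j =>
    (hμle (j, j.castSucc) (by simpa using hdiag j)).trans (by simpa using diag_le_gFactor hA hp x j)
  have hrest : μ ^ (n - 1) ≤ ∏ j ∈ univ.erase i, gFactor A p x j := by
    simpa [card_erase_of_mem] using prod_le_prod (s := univ.erase i) (fun _ _ => hμ.le)
      fun j _ => hfac j
  have hedge : μ * exp (extendZero x v - x i) ≤ gFactor A p x i :=
    (mul_le_mul_of_nonneg_right (hμle (i, v) hiv) (exp_pos _).le).trans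
      (aug_mul_exp_le_gFactor hA hp x i v)
  have hpow : μ ^ n = μ * μ ^ (n - 1) := by rw [← pow_succ', Nat.sub_add_cancel i.pos]
  calc μ ^ n * exp (extendZero x v - x i)
      = μ * exp (extendZero x v - x i) * μ ^ (n - 1) := by rw [hpow]; ring
    _ ≤ gFactor A p x i * ∏ j ∈ univ.erase i, gFactor A p x j :=
      mul_le_mul hedge hrest (by positivity) (gFactor_pos hA hp hdiag x i).le
    _ = g A p x := by rw [g_eq_prod_gFactor, mul_prod_erase _ _ (mem_univ i)]

theorem exists_neg_le_log_g (hirr : Irred A ∨ Irred (aug A p)) :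
    ∃ κ, ∀ (x : Fin n → ℝ) (r : Fin n), (∀ j, x r ≤ x j) →
      -x r ≤ κ + |∑ i, x i| + (n + 1) * log (g A p x) := by
  obtain ⟨c, hc, hcg⟩ := exists_pos_mul_exp_le_g hA hp hdiag
  refine ⟨-(n + 1) * log c, fun x r hr => ?_⟩
  set C := log (g A p x) - log c
  have hedge : ∀ i v, 0 < aug A p i.castSucc v → extendZero x v - x i ≤ C := fun i v hiv => by
    rw [le_sub_iff_add_le, le_log_iff_exp_le (g_pos hA hp hdiag x), exp_add, exp_log hc, mul_comm]
    exact hcg x i v hiv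
  have hC : 0 ≤ C := by simpa using hedge r r.castSucc (by simpa using hdiag r)
  have hspread : -x r ≤ |∑ i, x i| + (n + 1) * C := by
    rcases hirr with hirr | hirr
    · have : Nonempty (Fin n) := ⟨r⟩
      obtain ⟨s, hs⟩ := Finite.exists_max x
      have hrs := hirr.sub_le_mul x hC s
        (fun u v _ huv => by simpa using hedge u v.castSucc (by simpa using huv)) r
      -- `x s` is at least the mean of `x`, so the spread `x s - x r` controls `-x r`
      have hmax : ∑ i, x i ≤ n * x s := by
        simpa using sum_le_card_nsmul univ x (x s) fun j _ => hs j
      have hn : (1 : ℝ) ≤ n := by exact_mod_cast r.pos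
      have habs := neg_abs_le (∑ i, x i)
      have habs₀ := abs_nonneg (∑ i, x i)
      rcases le_total 0 (x s) with h | h <;> nlinarith
    · have := hirr.sub_le_mul (extendZero x) hC (Fin.last n) (fun u v hu huv => by
        obtain ⟨i, rfl⟩ := Fin.exists_castSucc_eq.2 hu
        simpa using hedge i v huv) r.castSucc
      push_cast at this
      simpa using this.trans (le_add_of_nonneg_left (abs_nonneg _))
  simp only [C] at hspread
  linarith

theorem g_coercive (hn : 1 ≤ n) (hirr : Irred A ∨ Irred (aug A p)) (γ M : ℝ) :
    ∃ R, ∀ x : Fin n → ℝ, ∑ i, x i = γ → R ≤ ‖x‖ → M ≤ g A p x := by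
  obtain ⟨κ, hκ⟩ := exists_neg_le_log_g hA hp hdiag hirr
  have : Nonempty (Fin n) := ⟨⟨0, hn⟩⟩
  refine ⟨2 * |γ| + n * (κ + |γ| + (n + 1) * log (max M 1)), fun x hx hR => ?_⟩
  obtain ⟨r, hr⟩ := Finite.exists_min x
  have hnorm := norm_le_two_mul_abs_sum_sub x hr
  have hneg := hκ x r hr
  rw [hx] at hnorm hneg
  by_contra! hlt
  have hlog : log (g A p x) < log (max M 1) :=
    log_lt_log (g_pos hA hp hdiag x) (hlt.trans_le (le_max_left _ _))
  have hn' : (0 : ℝ) < n := by exact_mod_cast hn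
  have : (n : ℝ) * ((n + 1) * log (g A p x)) < n * ((n + 1) * log (max M 1)) := by gcongr
  nlinarith

end Coercive

section Unique

variable {n : ℕ} {A : Matrix (Fin n) (Fin n) ℝ} {p : Fin n → ℝ}

theorem extendZero_midpoint (x y : Fin n → ℝ) (v : Fin (n + 1)) :
    extendZero (fun i => (x i + y i) / 2) v = (extendZero x v + extendZero y v) / 2 := by
  cases v using Fin.lastCases <;> simp

theorem gFactor_midpoint_eq (x y : Fin n → ℝ) (i : Fin n) :
    gFactor A p (fun i => (x i + y i) / 2) i
      = ∑ v, aug A p i.castSucc v *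
          exp (((extendZero x v - x i) + (extendZero y v - y i)) / 2) := by
  refine sum_congr rfl fun v _ => ?_
  rw [extendZero_midpoint]
  congr 2
  ring

theorem eq_of_forall_aug_pos (hirr : Irred A ∨ Irred (aug A p)) {x y : Fin n → ℝ}
    (hsum : ∑ i, x i = ∑ i, y i)
    (hedge : ∀ i v, 0 < aug A p i.castSucc v → extendZero y v - extendZero x v = y i - x i) :
    x = y := by
  funext r
  refine (sub_eq_zero.1 ?_).symm
  rcases hirr with hirr | hirr
  · have hconst : ∀ s, y s - x s = y r - x r := fun s =>
      hirr.eq_of_forall_pos (y - x) r (fun u v _ huv => by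
        simpa using hedge u v.castSucc (by simpa using huv)) s
    have : ∑ s, (y s - x s) = n * (y r - x r) := by simp [hconst, mul_sub]
    rw [sum_sub_distrib, hsum, sub_self] at this
    exact (mul_eq_zero.1 this.symm).resolve_left (by exact_mod_cast r.pos.ne')
  · simpa using hirr.eq_of_forall_pos (extendZero y - extendZero x) (Fin.last n)
      (fun u v hu huv => by
        obtain ⟨i, rfl⟩ := Fin.exists_castSucc_eq.2 hu
        simpa using hedge i v huv) r.castSucc

variable (hA : ∀ i j, 0 ≤ A i j) (hp : ∀ i, 0 ≤ p i)
include hA hp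

theorem sq_gFactor_midpoint_le (x y : Fin n → ℝ) (i : Fin n) :
    gFactor A p (fun i => (x i + y i) / 2) i ^ 2 ≤ gFactor A p x i * gFactor A p y i := by
  rw [gFactor_midpoint_eq]
  exact sq_sum_mul_exp_half_le _ _ _ _ fun v _ => aug_nonneg A p hA hp _ v

theorem sq_gFactor_midpoint_lt (hdiag : ∀ i, 0 < A i i) (x y : Fin n → ℝ) (i : Fin n)
    {v : Fin (n + 1)} (hv : 0 < aug A p i.castSucc v)
    (hne : extendZero y v - extendZero x v ≠ y i - x i) :
    gFactor A p (fun i => (x i + y i) / 2) i ^ 2 < gFactor A p x i * gFactor A p y i := by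
  rw [gFactor_midpoint_eq]
  refine sq_sum_mul_exp_half_lt _ _ _ _ (fun v _ => aug_nonneg A p hA hp _ v) (mem_univ v)
    (mem_univ i.castSucc) hv (by simpa using hdiag i) ?_
  simp only [extendZero_castSucc, sub_self]
  contrapose! hne
  linarith

theorem eq_of_isMinOn_g (hdiag : ∀ i, 0 < A i i) (hirr : Irred A ∨ Irred (aug A p)) {γ : ℝ}
    {x y : Fin n → ℝ} (hx : ∑ i, x i = γ) (hy : ∑ i, y i = γ)
    (hxmin : IsMinOn (g A p) {x | ∑ i, x i = γ} x)
    (hymin : IsMinOn (g A p) {x | ∑ i, x i = γ} y) :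
    x = y := by
  set z : Fin n → ℝ := fun i => (x i + y i) / 2
  have hz : ∑ i, z i = γ := by simp only [z, ← sum_div, sum_add_distrib, hx, hy]; ring
  have hgxy : g A p x = g A p y := le_antisymm (hxmin hy) (hymin hx)
  refine eq_of_forall_aug_pos hirr (hx.trans hy.symm) fun i v hv => ?_
  by_contra hne
  have hlt : g A p z ^ 2 < g A p x * g A p y := by
    simp only [g_eq_prod_gFactor, ← prod_pow, ← prod_mul_distrib]
    exact prod_lt_prod (fun j _ => pow_pos (gFactor_pos hA hp hdiag z j) 2)
      (fun j _ => sq_gFactor_midpoint_le hA hp x y j)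
      ⟨i, mem_univ i, sq_gFactor_midpoint_lt hA hp hdiag x y i hv hne⟩
  have hxz : g A p x ≤ g A p z := hxmin hz
  nlinarith [g_pos hA hp hdiag x]

end Unique

theorem continuous_g {n : ℕ} (A : Matrix (Fin n) (Fin n) ℝ) (p : Fin n → ℝ) :
    Continuous (g A p) := by
  unfold g
  fun_prop

theorem exists_isMinOn_of_coercive {n : ℕ} {f : (Fin n → ℝ) → ℝ} (hf : Continuous f)
    (hn : 1 ≤ n) (γ : ℝ) (hcoer : ∀ M, ∃ R, ∀ x : Fin n → ℝ, ∑ i, x i = γ → R ≤ ‖x‖ → M ≤ f x) :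
    ∃ x, ∑ i, x i = γ ∧ IsMinOn f {x | ∑ i, x i = γ} x := by
  set x₀ : Fin n → ℝ := fun _ => γ / n
  have hx₀ : ∑ i, x₀ i = γ := by
    simp only [x₀, sum_const, card_univ, Fintype.card_fin, nsmul_eq_mul]
    field_simp
  obtain ⟨R, hR⟩ := hcoer (f x₀)
  have hfar : ∀ᶠ x in cocompact (Fin n → ℝ) ⊓ 𝓟 {x | ∑ i, x i = γ}, f x₀ ≤ f x :=
    ((tendsto_norm_cocompact_atTop.eventually_ge_atTop R).filter_mono inf_le_left).and
      (mem_inf_of_right (mem_principal_self _)) |>.mono fun x hx => hR x hx.2 hx.1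
  exact hf.continuousOn.exists_isMinOn' (isClosed_eq (by fun_prop) continuous_const) hx₀ hfar

theorem stmt6 {n : ℕ} (hn : 2 ≤ n) (A : Matrix (Fin n) (Fin n) ℝ)
    (p : Fin n → ℝ) (γ : ℝ)
    (hA : ∀ i j, 0 ≤ A i j) (hp : ∀ i, 0 ≤ p i)
    (hdiag : ∀ i, 0 < A i i)
    (hirr : Irred A ∨ Irred (aug A p)) :
    (∀ M : ℝ, ∃ R : ℝ, ∀ x : Fin n → ℝ, (∑ i, x i) = γ → R ≤ ‖x‖ →
      M ≤ g A p x) ∧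
    (∃! x : Fin n → ℝ, (∑ i, x i) = γ ∧
      ∀ y : Fin n → ℝ, (∑ i, y i) = γ → g A p x ≤ g A p y) := by
  have hcoer := g_coercive hA hp hdiag (by omega) hirr γ
  obtain ⟨x, hx, hmin⟩ := exists_isMinOn_of_coercive (continuous_g A p) (by omega) γ hcoer
  exact ⟨hcoer, x, ⟨hx, hmin⟩,
    fun y ⟨hy, hymin⟩ => eq_of_isMinOn_g hA hp hdiag hirr hy hx hymin hmin⟩
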